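/- Let G = (V,E) be a graph on vertex set {1,…,n}, and on the n-qubit Hilbert space let C_Z = −Σ_{⟨i,j⟩∈E} Z_i Z_j and B = Σ_{i=1}^n X_i. Then for every string w ∈ {−1,1}ⁿ with computational basis state |w⟩ and every β ∈ ℝ, ⟨w| e^{iβB} C_Z e^{−iβB} |w⟩ = cos²(2β) · C_Z(w), where C_Z(w) = −Σ_{⟨i,j⟩∈E} w_i w_j. -/

import Mathlib

/-!
STATEMENT 9: For the `p = 1/2` QAOA (a quantum walk) on any graph,
`⟨w| e^{iβB} C_Z e^{−iβB} |w⟩ = cos²(2β) · C_Z(w)`.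
-/

open scoped Matrix

/-- The type of `n`-bit strings, identified with `{-1,1}ⁿ` via `sgn`. -/
abbrev Str (n : ℕ) := Fin n → Bool

/-- The `±1` value of a bit. -/
noncomputable def sgn (b : Bool) : ℝ := if b then 1 else -1

/-- Matrices on the `n`-qubit Hilbert space `ℂ^(2^n)`. -/
abbrev Mat (n : ℕ) := Matrix (Str n) (Str n) ℂ

/-- The Pauli `Z` operator on qubit `i`. -/
noncomputable def PauliZ (n : ℕ) (i : Fin n) : Mat n :=
  Matrix.diagonal fun z => (sgn (z i) : ℂ)

/-- The Pauli `X` operator on qubit `i`. -/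
noncomputable def PauliX (n : ℕ) (i : Fin n) : Mat n :=
  Matrix.of fun z z' => if z' = Function.update z i (!z i) then 1 else 0

/-- The mixing operator `B = Σᵢ Xᵢ`. -/
noncomputable def mixer (n : ℕ) : Mat n := ∑ i, PauliX n i

/-- Matrix exponential. -/
noncomputable def mexp {ι : Type*} [Fintype ι] [DecidableEq ι] (A : Matrix ι ι ℂ) : Matrix ι ι ℂ :=
  NormedSpace.exp A

/-- The operator `Z_i Z_j` attached to the edge `⟨i,j⟩`, as a function of the
unordered edge. -/
noncomputable def ZZedge (n : ℕ) : Sym2 (Fin n) → Mat n :=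
  Sym2.lift ⟨fun i j => PauliZ n i * PauliZ n j, fun i j => by
    simp [PauliZ, Matrix.diagonal_mul_diagonal, mul_comm]⟩

/-- The MaxCut operator `C_Z = −Σ_{⟨i,j⟩∈E} Z_i Z_j`. -/
noncomputable def CZop (n : ℕ) (G : SimpleGraph (Fin n)) [DecidableRel G.Adj] : Mat n :=
  -∑ e ∈ G.edgeFinset, ZZedge n e

/-- The classical value `C_Z(w) = −Σ_{⟨i,j⟩∈E} w_i w_j`. -/
noncomputable def CZval (n : ℕ) (G : SimpleGraph (Fin n)) [DecidableRel G.Adj]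
    (w : Str n) : ℝ :=
  -∑ e ∈ G.edgeFinset, Sym2.lift ⟨fun i j => sgn (w i) * sgn (w j), fun i j => by ring⟩ e

/-!
Write `U = exp (iβ B)`. The mixer is `Xᵢ` plus terms commuting with `Zᵢ`, and `Xᵢ` anticommutes
with `Zᵢ`, so `U Zᵢ U⁻¹ = Zᵢ exp (-2iβ Xᵢ)`. For an edge `i ≠ j`, `Zⱼ` commutes with `Xᵢ`, hence
`U ZᵢZⱼ U⁻¹ = ZᵢZⱼ · exp (-2iβ Xᵢ) exp (-2iβ Xⱼ)`. Since `Xᵢ² = 1`, each factor is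
`cos 2β - i sin 2β Xᵢ`, and `Xᵢ`, `Xⱼ`, `XᵢXⱼ` have zero diagonal, so the diagonal entry at `w` is
`cos² 2β · wᵢwⱼ`.
-/

open NormedSpace

section InvolutionExp

variable {𝔸 : Type*} [Ring 𝔸] [Algebra ℂ 𝔸] [TopologicalSpace 𝔸] [IsTopologicalRing 𝔸]
  [ContinuousSMul ℂ 𝔸] [T2Space 𝔸] {A : 𝔸}

theorem exp_smul_of_mul_self_eq_one (hA : A * A = 1) (z : ℂ) :
    exp (z • A) = Complex.cosh z • (1 : 𝔸) + Complex.sinh z • A := by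
  have h_even (k : ℕ) : A ^ (2 * k) = 1 := by rw [pow_mul, sq, hA, one_pow]
  have h_odd (k : ℕ) : A ^ (2 * k + 1) = A := by rw [pow_succ, h_even, one_mul]
  rw [exp_eq_tsum ℂ]
  refine HasSum.tsum_eq (HasSum.even_add_odd ?_ ?_)
  · convert (Complex.hasSum_cosh z).smul_const (1 : 𝔸) using 2 with k
    rw [smul_pow, h_even, smul_smul, inv_mul_eq_div]
  · convert (Complex.hasSum_sinh z).smul_const A using 2 with k
    rw [smul_pow, h_odd, smul_smul, inv_mul_eq_div]

theorem exp_smul_mul_of_anticommute {Z : 𝔸} (hA : A * A = 1) (hAZ : A * Z = -(Z * A))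
    (z : ℂ) : exp (z • A) * Z = Z * exp (-z • A) := by
  rw [exp_smul_of_mul_self_eq_one hA, exp_smul_of_mul_self_eq_one hA, Complex.cosh_neg,
    Complex.sinh_neg]
  simp only [add_mul, mul_add, smul_mul_assoc, mul_smul_comm, one_mul, mul_one, hAZ, neg_smul,
    mul_neg, smul_neg]

end InvolutionExp

section MatrixConj

variable {ι : Type*} [Fintype ι] [DecidableEq ι] {A S Z : Matrix ι ι ℂ}

theorem Matrix.exp_smul_mul_exp_neg_smul (z : ℂ) (S : Matrix ι ι ℂ) :
    exp (z • S) * exp (-z • S) = 1 := by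
  rw [← Matrix.exp_add_of_commute _ _ ((Commute.refl S).smul_left _ |>.smul_right _), ← add_smul,
    add_neg_cancel, zero_smul, exp_zero]

/-- `S` drops out of the conjugation, and `exp (z • A)` passes through `Z` as `exp (-z • A)`. -/
theorem Matrix.exp_conj_of_anticommute (hA : A * A = 1) (hAZ : A * Z = -(Z * A))
    (hAS : Commute A S) (hZS : Commute Z S) (z : ℂ) :
    exp (z • (A + S)) * Z * exp (-z • (A + S)) = Z * exp ((-2 * z) • A) := by
  have hsplit (c : ℂ) : exp (c • (A + S)) = exp (c • A) * exp (c • S) := by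
    rw [smul_add, Matrix.exp_add_of_commute _ _ ((hAS.smul_left _).smul_right _)]
  have hsplit' (c : ℂ) : exp (c • (A + S)) = exp (c • S) * exp (c • A) := by
    rw [add_comm, smul_add, Matrix.exp_add_of_commute _ _ ((hAS.symm.smul_left _).smul_right _)]
  have hdouble : exp (-z • A) * exp (-z • A) = exp ((-2 * z) • A) := by
    rw [← Matrix.exp_add_of_commute _ _ (Commute.refl _), ← add_smul]
    ring_nf
  calc exp (z • (A + S)) * Z * exp (-z • (A + S))
      = exp (z • A) * Z * (exp (z • S) * exp (-z • S)) * exp (-z • A) := by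
        rw [hsplit, hsplit', mul_assoc (exp (z • A)), ((hZS.symm.smul_left z).exp_left).eq]
        simp only [mul_assoc]
    _ = Z * exp ((-2 * z) • A) := by
        rw [Matrix.exp_smul_mul_exp_neg_smul, mul_one, exp_smul_mul_of_anticommute hA hAZ,
          mul_assoc, hdouble]

end MatrixConj

section Pauli

variable {n : ℕ}

def flipBit (z : Str n) (i : Fin n) : Str n := Function.update z i (!z i)

@[simp]
theorem flipBit_apply_self (z : Str n) (i : Fin n) : flipBit z i i = !z i :=
  Function.update_self ..

theorem flipBit_apply_of_ne {i j : Fin n} (h : j ≠ i) (z : Str n) : flipBit z i j = z j :=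
  Function.update_of_ne h ..

@[simp]
theorem flipBit_flipBit (z : Str n) (i : Fin n) : flipBit (flipBit z i) i = z := by
  simp [flipBit]

theorem flipBit_comm {i j : Fin n} (h : i ≠ j) (z : Str n) :
    flipBit (flipBit z i) j = flipBit (flipBit z j) i := by
  simp only [flipBit, Function.update_of_ne h, Function.update_of_ne h.symm]
  exact Function.update_comm h ..

theorem flipBit_ne (z : Str n) (i : Fin n) : flipBit z i ≠ z :=
  fun h => by simpa using congrFun h i

theorem PauliX_apply (i : Fin n) (z w : Str n) :
    PauliX n i z w = if w = flipBit z i then 1 else 0 := rfl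

theorem PauliX_mul_apply (i : Fin n) (M : Mat n) (z w : Str n) :
    (PauliX n i * M) z w = M (flipBit z i) w := by
  simp [Matrix.mul_apply, PauliX_apply]

theorem PauliX_apply_self (i : Fin n) (w : Str n) : PauliX n i w w = 0 := by
  simp [PauliX_apply, (flipBit_ne w i).symm]

theorem PauliX_mul_PauliX_apply_self {i j : Fin n} (h : i ≠ j) (w : Str n) :
    (PauliX n i * PauliX n j) w w = 0 := by
  rw [PauliX_mul_apply, PauliX_apply, if_neg]
  intro hw
  simpa [flipBit_apply_of_ne h] using congrFun hw i

theorem PauliX_mul_self (i : Fin n) : PauliX n i * PauliX n i = 1 := by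
  ext z w
  simp [PauliX_mul_apply, PauliX_apply, Matrix.one_apply, eq_comm]

theorem PauliX_commute (i j : Fin n) : Commute (PauliX n i) (PauliX n j) := by
  rcases eq_or_ne i j with rfl | h
  · exact Commute.refl _
  · ext z w
    simp only [PauliX_mul_apply, PauliX_apply, flipBit_comm h]

theorem PauliZ_commute_PauliX {i j : Fin n} (h : i ≠ j) :
    Commute (PauliZ n i) (PauliX n j) := by
  ext z w
  simp only [PauliZ, Matrix.diagonal_mul, Matrix.mul_diagonal, PauliX_apply]
  split_ifs with hw
  · rw [hw, flipBit_apply_of_ne h, mul_one, one_mul]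
  · simp

theorem PauliX_mul_PauliZ (i : Fin n) : PauliX n i * PauliZ n i = -(PauliZ n i * PauliX n i) := by
  ext z w
  simp only [PauliZ, Matrix.diagonal_mul, Matrix.mul_diagonal, PauliX_apply, Matrix.neg_apply]
  split_ifs with hw
  · cases h : z i <;> simp [hw, sgn, h]
  · simp

theorem mixer_eq_PauliX_add (i : Fin n) :
    mixer n = PauliX n i + ∑ k ∈ Finset.univ.erase i, PauliX n k :=
  (Finset.add_sum_erase _ _ (Finset.mem_univ i)).symm

end Pauli

section QAOA

variable {n : ℕ}

theorem mexp_mixer_conj_PauliZ (z : ℂ) (i : Fin n) :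
    mexp (z • mixer n) * PauliZ n i * mexp (-z • mixer n)
      = PauliZ n i * mexp ((-2 * z) • PauliX n i) := by
  rw [mexp, mexp, mexp, mixer_eq_PauliX_add i]
  exact Matrix.exp_conj_of_anticommute (PauliX_mul_self i) (PauliX_mul_PauliZ i)
    (Commute.sum_right _ _ _ fun k _ => PauliX_commute i k)
    (Commute.sum_right _ _ _ fun k hk => PauliZ_commute_PauliX (Finset.ne_of_mem_erase hk).symm) z

theorem mexp_PauliX_mul_mexp_PauliX_apply_self (c : ℂ) {i j : Fin n} (h : i ≠ j) (w : Str n) :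
    (mexp (c • PauliX n i) * mexp (c • PauliX n j)) w w = Complex.cosh c ^ 2 := by
  simp only [mexp, exp_smul_of_mul_self_eq_one (PauliX_mul_self _), add_mul, mul_add,
    smul_mul_assoc, mul_smul_comm, one_mul, mul_one, Matrix.add_apply, Matrix.smul_apply,
    Matrix.one_apply_eq, PauliX_apply_self, PauliX_mul_PauliX_apply_self h, smul_eq_mul]
  ring

theorem mexp_mixer_conj_ZZ_apply_self (z : ℂ) {i j : Fin n} (h : i ≠ j) (w : Str n) :
    (mexp (z • mixer n) * (PauliZ n i * PauliZ n j) * mexp (-z • mixer n)) w w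
      = Complex.cosh (2 * z) ^ 2 * (sgn (w i) * sgn (w j)) := by
  have hVU : mexp (-z • mixer n) * mexp (z • mixer n) = 1 := by
    simpa only [mexp, neg_neg] using Matrix.exp_smul_mul_exp_neg_smul (-z) (mixer n)
  have hconj_mul {U V : Mat n} (hVU : V * U = 1) (A B : Mat n) :
      U * (A * B) * V = (U * A * V) * (U * B * V) := by
    simp only [mul_assoc]
    rw [← mul_assoc V U, hVU, one_mul]
  have hcomm : Commute (mexp ((-2 * z) • PauliX n i)) (PauliZ n j) :=
    ((PauliZ_commute_PauliX h.symm).symm.smul_left _).exp_left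
  rw [hconj_mul hVU, mexp_mixer_conj_PauliZ, mexp_mixer_conj_PauliZ, mul_assoc, ← mul_assoc _ (PauliZ n j), hcomm.eq, mul_assoc, ← mul_assoc, PauliZ, PauliZ,
    Matrix.diagonal_mul_diagonal, Matrix.diagonal_mul, mexp_PauliX_mul_mexp_PauliX_apply_self _ h,
    neg_mul, Complex.cosh_neg]
  ring

end QAOA

theorem stmt9 (n : ℕ) (G : SimpleGraph (Fin n)) [DecidableRel G.Adj]
    (w : Str n) (β : ℝ) :
    (mexp ((Complex.I * β) • mixer n) * CZop n G *
      mexp ((-(Complex.I * β)) • mixer n)) w w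
      = ((Real.cos (2 * β)) ^ 2 * CZval n G w : ℝ) := by
  have hcosh : Complex.cosh (2 * (Complex.I * β)) = Real.cos (2 * β) := by
    rw [show 2 * (Complex.I * β) = ((2 * β : ℝ) : ℂ) * Complex.I by push_cast; ring,
      Complex.cosh_mul_I, Complex.ofReal_cos]
  have hedge : ∀ e ∈ G.edgeFinset,
      (mexp ((Complex.I * β) • mixer n) * ZZedge n e * mexp ((-(Complex.I * β)) • mixer n)) w w
        = Real.cos (2 * β) ^ 2
          * (Sym2.lift ⟨fun i j => sgn (w i) * sgn (w j), fun i j => by ring⟩ e : ℝ) := by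
    intro e he
    induction e using Sym2.ind with
    | _ i j =>
      rw [ZZedge, Sym2.lift_mk, Sym2.lift_mk,
        mexp_mixer_conj_ZZ_apply_self _ (G.ne_of_adj (by simpa using he)), hcosh]
      push_cast
      ring
  rw [CZop, Matrix.mul_neg, Matrix.neg_mul, Finset.mul_sum, Finset.sum_mul, Matrix.neg_apply,
    Matrix.sum_apply, Finset.sum_congr rfl hedge, CZval, ← Finset.mul_sum]
  push_cast
  ring
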